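/- If φ ∈ Aut(P) does not belong to Aut_Ḡ(P), i.e. there is no g ∈ G with (φ(u))‾ = (g^{-1}ug)‾ for all u ∈ P, then A(Δ_φ(P)) = 0; equivalently A^{Δ_φ(P)} = Σ_{Q<P} A^{Δ_φ(P)}_{Δ_φ(Q)} + 𝔭·A^{Δ_φ(P)}. -/

import Mathlib

open scoped Classical

section Common

variable (𝒪 : Type*) [CommRing 𝒪]
variable {A : Type*} [Ring A] [Algebra 𝒪 A]
variable {P : Type*} [Group P]

/-- `A^{Δ_φ(Q)}`: elements `a` with `u·a = a·φ(u)` for all `u ∈ Q`. -/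
def intFixed (σ : P →* Aˣ) (φ : P ≃* P) (Q : Subgroup P) : Submodule 𝒪 A where
  carrier := {a | ∀ u ∈ Q, (σ u : A) * a = a * (σ (φ u) : A)}
  add_mem' := by intro a b ha hb u hu; rw [mul_add, add_mul, ha u hu, hb u hu]
  zero_mem' := by intro u hu; rw [mul_zero, zero_mul]
  smul_mem' := by intro r a ha u hu
                  rw [mul_smul_comm, smul_mul_assoc, ha u hu]

/-- relative trace `Tr_{Δ_φ(Q)}^{Δ_φ(P)}`. -/
noncomputable def relTr [Finite P] (σ : P →* Aˣ) (φ : P ≃* P) (Q : Subgroup P) (c : A) : A :=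
  ∑ᶠ x : Quotient (QuotientGroup.rightRel Q),
    ((σ x.out)⁻¹ : Aˣ) * c * (σ (φ x.out) : A)

/-- `Σ_{Q < P} A^{Δ_φ(P)}_{Δ_φ(Q)}`. -/
noncomputable def trSum [Finite P] (σ : P →* Aˣ) (φ : P ≃* P) : Submodule 𝒪 A :=
  ⨆ Q : {Q : Subgroup P // Q < ⊤},
    Submodule.span 𝒪 (relTr σ φ Q '' (intFixed 𝒪 σ φ Q))

/-- `Σ_{Q<P} A^{Δ_φ(P)}_{Δ_φ(Q)} + 𝔭·A^{Δ_φ(P)}`. -/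
noncomputable def brDen [Finite P] (𝔭 : Ideal 𝒪) (σ : P →* Aˣ) (φ : P ≃* P) : Submodule 𝒪 A :=
  trSum 𝒪 σ φ ⊔ 𝔭 • intFixed 𝒪 σ φ ⊤

end Common


section Aux

open QuotientGroup

variable {𝒪 : Type*} [CommRing 𝒪]
variable {A : Type*} [Ring A] [Algebra 𝒪 A]
variable {P : Type*} [Group P]
variable {Γ : Type*} [Group Γ]

/-- the twisted right action `x ↦ (deg u)⁻¹ x deg(φ u)` -/
private def rho (deg : P →* Γ) (φ : P ≃* P) (u : P) (x : Γ) : Γ :=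
  (deg u)⁻¹ * x * deg (φ u)

private lemma rho_one (deg : P →* Γ) (φ : P ≃* P) (x : Γ) : rho deg φ 1 x = x := by
  simp [rho]

private lemma rho_rho (deg : P →* Γ) (φ : P ≃* P) (u v : P) (x : Γ) :
    rho deg φ u (rho deg φ v x) = rho deg φ (v * u) x := by
  simp [rho, map_mul, mul_inv_rev, mul_assoc]

private lemma rho_inv_self (deg : P →* Γ) (φ : P ≃* P) (u : P) (x : Γ) :
    rho deg φ u⁻¹ (rho deg φ u x) = x := by
  rw [rho_rho, mul_inv_cancel, rho_one]

/-- stabilizer of `x` under the twisted action -/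
private def rstab (deg : P →* Γ) (φ : P ≃* P) (x : Γ) : Subgroup P where
  carrier := {u | x * deg (φ u) = deg u * x}
  one_mem' := by simp
  mul_mem' := by
    intro a b ha hb
    simp only [Set.mem_setOf_eq, map_mul] at *
    rw [← mul_assoc, ha, mul_assoc, hb, ← mul_assoc]
  inv_mem' := by
    intro a ha
    simp only [Set.mem_setOf_eq, map_inv] at *
    rw [mul_inv_eq_iff_eq_mul, mul_assoc, ha, ← mul_assoc, inv_mul_cancel, one_mul]

private lemma mem_rstab_iff (deg : P →* Γ) (φ : P ≃* P) (x : Γ) (u : P) :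
    u ∈ rstab deg φ x ↔ rho deg φ u x = x := by
  constructor
  · intro h
    show (deg u)⁻¹ * x * deg (φ u) = x
    rw [mul_assoc, h, ← mul_assoc, inv_mul_cancel, one_mul]
  · intro h
    show x * deg (φ u) = deg u * x
    calc x * deg (φ u) = deg u * ((deg u)⁻¹ * x * deg (φ u)) := by group
    _ = deg u * x := by rw [show (deg u)⁻¹ * x * deg (φ u) = x from h]


variable [Finite P]

/-- the summand used in `relTr` -/
private def Fc (σ : P →* Aˣ) (φ : P ≃* P) (c : A) (u : P) : A :=
  ((σ u⁻¹ : Aˣ) : A) * c * ((σ (φ u) : Aˣ) : A)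

private lemma sigma_cancel (σ : P →* Aˣ) (u : P) (a : A) :
    ((σ u : Aˣ) : A) * (((σ u⁻¹ : Aˣ) : A) * a) = a := by
  rw [← mul_assoc, ← Units.val_mul, ← map_mul, mul_inv_cancel, map_one, Units.val_one, one_mul]

private lemma sigma_cancel' (σ : P →* Aˣ) (u : P) (a : A) :
    a * ((σ u⁻¹ : Aˣ) : A) * ((σ u : Aˣ) : A) = a := by
  rw [mul_assoc, ← Units.val_mul, ← map_mul, inv_mul_cancel, map_one, Units.val_one, mul_one]

private lemma Fc_coset (σ : P →* Aˣ) (φ : P ≃* P) {Q : Subgroup P} {c : A}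
    (hc : c ∈ intFixed 𝒪 σ φ Q) {q : P} (hq : q ∈ Q) (u : P) :
    Fc σ φ c (q * u) = Fc σ φ c u := by
  have h1 : (σ q : A) * c = c * (σ (φ q) : A) := hc q hq
  have h2 : ((σ q⁻¹ : Aˣ) : A) * c * ((σ (φ q) : Aˣ) : A) = c := by
    rw [mul_assoc, ← h1, ← mul_assoc, ← Units.val_mul, ← map_mul, inv_mul_cancel,
      map_one, Units.val_one, one_mul]
  calc Fc σ φ c (q * u)
      = ((σ u⁻¹ : Aˣ) : A) * (((σ q⁻¹ : Aˣ) : A) * c * ((σ (φ q) : Aˣ) : A))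
        * ((σ (φ u) : Aˣ) : A) := by
        simp only [Fc, mul_inv_rev, map_mul, Units.val_mul, mul_assoc]
    _ = Fc σ φ c u := by rw [h2]; rfl

private lemma Fc_rel (σ : P →* Aˣ) (φ : P ≃* P) {Q : Subgroup P} {c : A}
    (hc : c ∈ intFixed 𝒪 σ φ Q) : ∀ x y : P, (rightRel Q) x y → Fc σ φ c x = Fc σ φ c y := by
  intro x y h
  rw [rightRel_apply] at h
  have hy : y = (y * x⁻¹) * x := by group
  rw [hy, Fc_coset σ φ hc h x]

private lemma relTr_eq_sum_Fbar (σ : P →* Aˣ) (φ : P ≃* P) {Q : Subgroup P} {c : A}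
    (hc : c ∈ intFixed 𝒪 σ φ Q) [Fintype (Quotient (rightRel Q))] :
    relTr σ φ Q c = ∑ t : Quotient (rightRel Q),
      Quotient.lift (Fc σ φ c) (Fc_rel σ φ hc) t := by
  rw [relTr, finsum_eq_sum_of_fintype]
  refine Finset.sum_congr rfl fun t _ => ?_
  conv_rhs => rw [← Quotient.out_eq t]
  show ((σ t.out)⁻¹ : Aˣ) * c * (σ (φ t.out) : A) = Fc σ φ c t.out
  rw [Fc, map_inv]

/-- the relative trace of an element of `A^{Δ_φ(Q)}` lies in `A^{Δ_φ(P)}` -/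
private lemma relTr_mem_intFixed_top (σ : P →* Aˣ) (φ : P ≃* P) (Q : Subgroup P) {c : A}
    (hc : c ∈ intFixed 𝒪 σ φ Q) : relTr σ φ Q c ∈ intFixed 𝒪 σ φ (⊤ : Subgroup P) := by
  classical
  letI : Fintype (Quotient (rightRel Q)) := Fintype.ofFinite _
  set Fbar : Quotient (rightRel Q) → A := Quotient.lift (Fc σ φ c) (Fc_rel σ φ hc) with hFbar
  intro v _
  -- translation by v⁻¹ on right cosets
  have hwd : ∀ x y : P, (rightRel Q) x y → (rightRel Q) (x * v⁻¹) (y * v⁻¹) := by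
    intro x y h
    rw [rightRel_apply] at h ⊢
    have : y * v⁻¹ * (x * v⁻¹)⁻¹ = y * x⁻¹ := by group
    rwa [this]
  have hwd' : ∀ x y : P, (rightRel Q) x y → (rightRel Q) (x * v) (y * v) := by
    intro x y h
    rw [rightRel_apply] at h ⊢
    have : y * v * (x * v)⁻¹ = y * x⁻¹ := by group
    rwa [this]
  let ev : Quotient (rightRel Q) ≃ Quotient (rightRel Q) :=
    { toFun := Quotient.map (· * v⁻¹) hwd
      invFun := Quotient.map (· * v) hwd'
      left_inv := by
        refine Quotient.ind fun x => ?_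
        simp [Quotient.map_mk]
      right_inv := by
        refine Quotient.ind fun x => ?_
        simp [Quotient.map_mk] }
  have key : ∀ u : P, (σ v : A) * Fc σ φ c u = Fc σ φ c (u * v⁻¹) * (σ (φ v) : A) := by
    intro u
    have e1 : (u * v⁻¹)⁻¹ = v * u⁻¹ := by group
    simp only [Fc, e1, map_mul, map_inv, Units.val_mul, mul_assoc, Units.inv_mul, mul_one]
  have hrt : relTr σ φ Q c = ∑ t : Quotient (rightRel Q), Fbar t :=
    relTr_eq_sum_Fbar σ φ hc
  rw [hrt, Finset.mul_sum, Finset.sum_mul]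
  have step : ∀ t : Quotient (rightRel Q),
      (σ v : A) * Fbar t = Fbar (ev t) * (σ (φ v) : A) := by
    refine Quotient.ind fun u => ?_
    show (σ v : A) * Fc σ φ c u = Fbar (Quotient.map (· * v⁻¹) hwd ⟦u⟧) * (σ (φ v) : A)
    rw [Quotient.map_mk]
    exact key u
  calc ∑ t, (σ v : A) * Fbar t = ∑ t, Fbar (ev t) * (σ (φ v) : A) :=
        Finset.sum_congr rfl fun t _ => step t
    _ = ∑ t, Fbar t * (σ (φ v) : A) := Equiv.sum_comp ev (fun t => Fbar t * (σ (φ v) : A))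


/-- Main graded lemma: if the twisted action of `P` on the grading group `Γ` has no
fixed point, then every `φ`-fixed element is a sum of relative traces from proper
subgroups. -/
private lemma intFixed_top_le_trSum
    [Finite Γ] [DecidableEq Γ] (𝒜 : Γ → Submodule 𝒪 A)
    (hmul : ∀ x y : Γ, 𝒜 x * 𝒜 y ≤ 𝒜 (x * y))
    (hdec : DirectSum.IsInternal 𝒜)
    (σ : P →* Aˣ) (φ : P ≃* P) (deg : P →* Γ)
    (hdeg : ∀ u : P, ((σ u : Aˣ) : A) ∈ 𝒜 (deg u))
    (hnf : ∀ x : Γ, ∃ u : P, rho deg φ u x ≠ x) :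
    intFixed 𝒪 σ φ (⊤ : Subgroup P) ≤ trSum 𝒪 σ φ := by
  classical
  letI : Fintype Γ := Fintype.ofFinite Γ
  -- the grading projections
  let E : DirectSum Γ (fun i => 𝒜 i) ≃ₗ[𝒪] A := LinearEquiv.ofBijective (DirectSum.coeLinearMap 𝒜) hdec
  let cp : Γ → A → A := fun i a => (E.symm a i : A)
  have hcp2 : ∀ i a, cp i a ∈ 𝒜 i := fun i a => (E.symm a i).2
  have hcp1 : ∀ a : A, ∑ i, cp i a = a := by
    intro a
    have h1 : ∑ i, DirectSum.of (fun i => 𝒜 i) i (E.symm a i) = E.symm a :=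
      DirectSum.sum_univ_of (E.symm a)
    have h2 := congrArg (DirectSum.coeLinearMap 𝒜) h1
    rw [map_sum] at h2
    simp only [DirectSum.coeLinearMap_of] at h2
    have h3 : DirectSum.coeLinearMap 𝒜 (E.symm a) = a := E.apply_symm_apply a
    rw [h3] at h2
    exact h2
  have hcpof : ∀ (j i : Γ) (b : A), b ∈ 𝒜 i → cp j b = if j = i then b else 0 := by
    intro j i b hb
    by_cases h : j = i
    · subst h
      show ((E.symm b) j : A) = if j = j then b else 0
      rw [hdec.ofBijective_coeLinearMap_of_mem hb, if_pos rfl]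
    · show ((E.symm b) j : A) = if j = i then b else 0
      rw [hdec.ofBijective_coeLinearMap_of_mem_ne (Ne.symm h) hb, if_neg h]
      rfl
  -- linearity of projections
  let cpl : Γ → A →ₗ[𝒪] A := fun i =>
    { toFun := cp i
      map_add' := by intro a b; show ((E.symm (a + b)) i : A) = _; rw [map_add]; rfl
      map_smul' := by intro r a; show ((E.symm (r • a)) i : A) = _; rw [map_smul]; rfl }
  have huniq : ∀ (g : Γ → A), (∀ i, g i ∈ 𝒜 i) → ∀ j, cp j (∑ i, g i) = g j := by
    intro g hg j
    have : cp j (∑ i, g i) = ∑ i, cp j (g i) := map_sum (cpl j) g Finset.univ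
    rw [this]
    have : ∀ i : Γ, cp j (g i) = if j = i then g i else 0 := fun i => hcpof j i (g i) (hg i)
    rw [Finset.sum_congr rfl (fun i _ => this i)]
    simp
  -- the component shifting identity
  intro a ha
  have ha' : ∀ u : P, (σ u : A) * a = a * (σ (φ u) : A) := fun u => ha u trivial
  have hmem : ∀ (u : P) (y : Γ) (b : A), b ∈ 𝒜 y →
      ((σ u⁻¹ : Aˣ) : A) * b * ((σ (φ u) : Aˣ) : A) ∈ 𝒜 (rho deg φ u y) := by
    intro u y b hb
    have h1 : ((σ u⁻¹ : Aˣ) : A) ∈ 𝒜 ((deg u)⁻¹) := by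
      have := hdeg u⁻¹; rwa [map_inv] at this
    have h2 := hmul _ _ (Submodule.mul_mem_mul h1 hb)
    have h3 := hmul _ _ (Submodule.mul_mem_mul h2 (hdeg (φ u)))
    exact h3
  have L5 : ∀ (u : P) (x : Γ),
      cp (rho deg φ u x) a = ((σ u⁻¹ : Aˣ) : A) * cp x a * ((σ (φ u) : Aˣ) : A) := by
    intro u x
    have h0 : a = ((σ u⁻¹ : Aˣ) : A) * a * ((σ (φ u) : Aˣ) : A) := by
      rw [mul_assoc, ← ha' u, ← mul_assoc, ← Units.val_mul, ← map_mul, inv_mul_cancel,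
        map_one, Units.val_one, one_mul]
    -- reindexed decomposition of a
    let rinv : Γ → Γ := fun z => deg u * z * (deg (φ u))⁻¹
    have hri : ∀ z, rho deg φ u (rinv z) = z := by intro z; simp [rho, rinv]; group
    have hir : ∀ z, rinv (rho deg φ u z) = z := by intro z; simp [rho, rinv]; group
    let e : Γ ≃ Γ := ⟨rho deg φ u, rinv, hir, hri⟩
    let g : Γ → A := fun z => ((σ u⁻¹ : Aˣ) : A) * cp (rinv z) a * ((σ (φ u) : Aˣ) : A)
    have hg : ∀ z, g z ∈ 𝒜 z := by
      intro z
      have := hmem u (rinv z) (cp (rinv z) a) (hcp2 _ _)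
      rwa [hri z] at this
    have hsum : ∑ z, g z = a := by
      have : ∑ z, g z = ∑ x, g (e x) := (Equiv.sum_comp e g).symm
      rw [this]
      have : ∀ x : Γ, g (e x) = ((σ u⁻¹ : Aˣ) : A) * cp x a * ((σ (φ u) : Aˣ) : A) := by
        intro x
        show ((σ u⁻¹ : Aˣ) : A) * cp (rinv (rho deg φ u x)) a * ((σ (φ u) : Aˣ) : A) = _
        rw [hir x]
      rw [Finset.sum_congr rfl (fun x _ => this x)]
      calc ∑ x, ((σ u⁻¹ : Aˣ) : A) * cp x a * ((σ (φ u) : Aˣ) : A)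
          = ((σ u⁻¹ : Aˣ) : A) * (∑ x, cp x a) * ((σ (φ u) : Aˣ) : A) := by
            rw [Finset.mul_sum, Finset.sum_mul]
        _ = ((σ u⁻¹ : Aˣ) : A) * a * ((σ (φ u) : Aˣ) : A) := by rw [hcp1 a]
        _ = a := h0.symm
    have := huniq g hg (rho deg φ u x)
    rw [hsum] at this
    rw [this]
    show ((σ u⁻¹ : Aˣ) : A) * cp (rinv (rho deg φ u x)) a * ((σ (φ u) : Aˣ) : A) = _
    rw [hir x]
  -- the orbit setoid
  let s : Setoid Γ :=
    { r := fun y z => ∃ u : P, rho deg φ u y = z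
      iseqv := by
        constructor
        · intro y; exact ⟨1, rho_one deg φ y⟩
        · rintro y z ⟨u, rfl⟩
          exact ⟨u⁻¹, rho_inv_self deg φ u y⟩
        · rintro y z w ⟨u, rfl⟩ ⟨v, rfl⟩
          exact ⟨u * v, (rho_rho deg φ v u y).symm⟩ }
  letI : Fintype (Quotient s) := Fintype.ofFinite _
  have hdc : a = ∑ ω : Quotient s, ∑ i ∈ Finset.univ.filter (fun i => Quotient.mk s i = ω), cp i a := by
    rw [Finset.sum_fiberwise Finset.univ (Quotient.mk s) (fun i => cp i a), hcp1 a]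
  rw [hdc]
  apply Submodule.sum_mem
  intro ω _
  set x := ω.out with hx
  set Q : Subgroup P := rstab deg φ x with hQdef
  have hQfix : ∀ q ∈ Q, rho deg φ q x = x := fun q hq => (mem_rstab_iff deg φ x q).1 hq
  have hQlt : Q < ⊤ := by
    rw [lt_top_iff_ne_top]
    intro hQtop
    obtain ⟨u, hu⟩ := hnf x
    have hu' : u ∈ Q := by rw [hQtop]; exact Subgroup.mem_top u
    exact hu ((mem_rstab_iff deg φ x u).1 hu')
  -- c x a is Q-fixed
  have hcx : cp x a ∈ intFixed 𝒪 σ φ Q := by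
    intro q hq
    have h1 := L5 q x
    rw [hQfix q hq] at h1
    calc (σ q : A) * cp x a
        = (σ q : A) * (((σ q⁻¹ : Aˣ) : A) * cp x a * ((σ (φ q) : Aˣ) : A)) := by rw [← h1]
      _ = cp x a * (σ (φ q) : A) := by
          rw [mul_assoc ((σ q⁻¹ : Aˣ) : A) (cp x a) ((σ (φ q) : Aˣ) : A),
            sigma_cancel σ q (cp x a * ((σ (φ q) : Aˣ) : A))]
  -- the inner sum is the relative trace
  letI : Fintype (Quotient (rightRel Q)) := Fintype.ofFinite _
  have hsum : ∑ i ∈ Finset.univ.filter (fun i => Quotient.mk s i = ω), cp i a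
      = relTr σ φ Q (cp x a) := by
    rw [relTr, finsum_eq_sum_of_fintype]
    symm
    refine Finset.sum_bij (fun (t : Quotient (rightRel Q)) _ => rho deg φ t.out x) ?_ ?_ ?_ ?_
    · intro t _
      rw [Finset.mem_filter]
      refine ⟨Finset.mem_univ _, ?_⟩
      have h1 : Quotient.mk s x = ω := Quotient.out_eq ω
      have h2 : Quotient.mk s (rho deg φ t.out x) = Quotient.mk s x :=
        (Quotient.sound ⟨t.out, rfl⟩ : Quotient.mk s x = Quotient.mk s (rho deg φ t.out x)).symm
      rw [h2, h1]
    · intro t₁ _ t₂ _ h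
      have h' : rho deg φ t₁.out x = rho deg φ t₂.out x := h
      have hmem' : t₁.out * t₂.out⁻¹ ∈ Q := by
        refine (mem_rstab_iff deg φ x _).2 ?_
        calc rho deg φ (t₁.out * t₂.out⁻¹) x
            = rho deg φ t₂.out⁻¹ (rho deg φ t₁.out x) := (rho_rho deg φ t₂.out⁻¹ t₁.out x).symm
          _ = rho deg φ t₂.out⁻¹ (rho deg φ t₂.out x) := by rw [h']
          _ = x := rho_inv_self deg φ t₂.out x
      have : (rightRel Q) t₂.out t₁.out := by
        rw [rightRel_apply]; exact hmem'
      calc t₁ = Quotient.mk (rightRel Q) t₁.out := (Quotient.out_eq t₁).symm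
        _ = Quotient.mk (rightRel Q) t₂.out := (Quotient.sound this).symm
        _ = t₂ := Quotient.out_eq t₂
    · intro y hy
      rw [Finset.mem_filter] at hy
      have h1 : Quotient.mk s x = Quotient.mk s y := by
        rw [hy.2, ← Quotient.out_eq ω]
      obtain ⟨u, hu⟩ := Quotient.exact h1
      refine ⟨Quotient.mk (rightRel Q) u, Finset.mem_univ _, ?_⟩
      have hrel : (rightRel Q) (Quotient.mk (rightRel Q) u).out u := Quotient.mk_out u
      rw [rightRel_apply] at hrel
      have hout : (Quotient.mk (rightRel Q) u).out
          = (u * (Quotient.mk (rightRel Q) u).out⁻¹)⁻¹ * u := by group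
      show rho deg φ (Quotient.mk (rightRel Q) u).out x = y
      rw [hout]
      have hq' : (u * (Quotient.mk (rightRel Q) u).out⁻¹)⁻¹ ∈ Q := inv_mem hrel
      calc rho deg φ ((u * (Quotient.mk (rightRel Q) u).out⁻¹)⁻¹ * u) x
          = rho deg φ u (rho deg φ (u * (Quotient.mk (rightRel Q) u).out⁻¹)⁻¹ x) :=
            (rho_rho deg φ _ _ x).symm
        _ = rho deg φ u x := by rw [hQfix _ hq']
        _ = y := hu
    · intro t _
      show ((σ t.out)⁻¹ : Aˣ) * cp x a * (σ (φ t.out) : A) = cp (rho deg φ t.out x) a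
      rw [L5 t.out x, map_inv]
  rw [hsum]
  -- membership in trSum
  have hmem' : relTr σ φ Q (cp x a) ∈
      Submodule.span 𝒪 (relTr σ φ Q '' (intFixed 𝒪 σ φ Q)) :=
    Submodule.subset_span ⟨cp x a, hcx, rfl⟩
  exact (le_iSup (fun (Q' : {Q' : Subgroup P // Q' < ⊤}) =>
    Submodule.span 𝒪 (relTr σ φ (Q' : Subgroup P) '' (intFixed 𝒪 σ φ (Q' : Subgroup P))))
    ⟨Q, hQlt⟩) hmem'


private lemma trSum_le_intFixed_top (σ : P →* Aˣ) (φ : P ≃* P) :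
    trSum 𝒪 σ φ ≤ intFixed 𝒪 σ φ (⊤ : Subgroup P) := by
  refine iSup_le fun Q => ?_
  rw [Submodule.span_le]
  rintro _ ⟨c, hc, rfl⟩
  exact relTr_mem_intFixed_top σ φ (Q : Subgroup P) hc

end Aux

/-- the Brauer quotient `A(Δ_φ(P))`. -/
noncomputable abbrev BrQuot {𝒪 : Type*} [CommRing 𝒪] {A : Type*} [Ring A] [Algebra 𝒪 A]
    {P : Type*} [Group P] [Finite P] (𝔭 : Ideal 𝒪) (σ : P →* Aˣ) (φ : P ≃* P) :=
  ↥(intFixed 𝒪 σ φ ⊤) ⧸ ((brDen 𝒪 𝔭 σ φ).comap (intFixed 𝒪 σ φ ⊤).subtype)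

/-- With `A = B ⊗_{𝒪H} 𝒪G` the induced `G`-interior `Ḡ`-graded algebra as
in Statement 6: if `φ ∈ Aut(P)` does not belong to `Aut_Ḡ(P)`, i.e. there is no `g ∈ G` with
`(φ(u))‾ = (g⁻¹ug)‾` for all `u ∈ P`, then `A(Δ_φ(P)) = 0`; equivalently
`A^{Δ_φ(P)} = Σ_{Q<P} A^{Δ_φ(P)}_{Δ_φ(Q)} + 𝔭·A^{Δ_φ(P)}`. -/
theorem stmt7
    (𝒪 : Type*) [CommRing 𝒪] [IsDomain 𝒪] [IsDiscreteValuationRing 𝒪]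
    [IsAdicComplete (IsLocalRing.maximalIdeal 𝒪) 𝒪]
    (p : ℕ) [Fact p.Prime] [CharP (IsLocalRing.ResidueField 𝒪) p]
    (G : Type*) [Group G] [Finite G] (H P : Subgroup G) [H.Normal] (hP : IsPGroup p ↥P)
    (A : Type*) [Ring A] [Algebra 𝒪 A] (σG : G →* Aˣ)
    (𝒜 : G ⧸ H → Submodule 𝒪 A)
    (hmul : ∀ x y : G ⧸ H, 𝒜 x * 𝒜 y ≤ 𝒜 (x * y))
    (hone : (1 : A) ∈ 𝒜 1)
    (hσ : ∀ g : G, ((σG g : Aˣ) : A) ∈ 𝒜 ↑g)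
    (hdec : DirectSum.IsInternal 𝒜)
    (φ : MulAut ↥P)
    -- `φ ∉ Aut_Ḡ(P)`:
    (hφ : ¬ ∃ g : G, ∀ u : ↥P, (((φ u : ↥P) : G) : G ⧸ H) = ↑(g⁻¹ * ↑u * g)) :
    intFixed 𝒪 (σG.comp P.subtype) φ ⊤ =
      brDen 𝒪 (IsLocalRing.maximalIdeal 𝒪) (σG.comp P.subtype) φ ∧
    Subsingleton (BrQuot (IsLocalRing.maximalIdeal 𝒪) (σG.comp P.subtype) φ) := by
  classical
  let deg : ↥P →* G ⧸ H := (QuotientGroup.mk' H).comp P.subtype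
  have hdeg : ∀ u : ↥P, ((σG.comp P.subtype) u : A) ∈ 𝒜 (deg u) := fun u => hσ (u : G)
  have hnf : ∀ x : G ⧸ H, ∃ u : ↥P, rho deg φ u x ≠ x := by
    intro x
    by_contra hcon
    push_neg at hcon
    obtain ⟨g, hg⟩ := QuotientGroup.mk_surjective x
    apply hφ
    refine ⟨g, fun u => ?_⟩
    have h1' : (deg u)⁻¹ * x * deg (φ u) = x := hcon u
    have h2 : deg (φ u) = x⁻¹ * deg u * x := by
      calc deg (φ u) = x⁻¹ * (deg u * ((deg u)⁻¹ * x * deg (φ u))) := by group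
        _ = x⁻¹ * (deg u * x) := by rw [h1']
        _ = x⁻¹ * deg u * x := by group
    calc (((φ u : ↥P) : G) : G ⧸ H) = deg (φ u) := rfl
      _ = x⁻¹ * deg u * x := h2
      _ = (↑g)⁻¹ * ((↑u : G) : G ⧸ H) * ↑g := by rw [← hg]; rfl
      _ = ↑(g⁻¹ * ↑u * g) := by simp
  have h1 := intFixed_top_le_trSum 𝒜 hmul hdec (σG.comp P.subtype) φ deg hdeg hnf
  have h2 := trSum_le_intFixed_top (𝒪 := 𝒪) (A := A) (σG.comp P.subtype) φ
  have heq : intFixed 𝒪 (σG.comp P.subtype) φ ⊤ =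
      brDen 𝒪 (IsLocalRing.maximalIdeal 𝒪) (σG.comp P.subtype) φ :=
    le_antisymm (le_trans h1 le_sup_left) (sup_le h2 Submodule.smul_le_right)
  refine ⟨heq, ?_⟩
  rw [Submodule.Quotient.subsingleton_iff, ← heq]
  exact Submodule.comap_subtype_self _
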